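/- There is an absolute constant C > 0 such that: for every real sequence c = (c_n)_{n≥0} in ℓ²_{3/4} there exists a real sequence f = (f_k)_{k≥0} in ℓ²_{3/4} with ∑_{k≥0} f_k = 0 and c_n = ∑_{k=0}^n E_{n−k} f_k for all n ≥ 0, and moreover ‖f‖_{ℓ²_{3/4}} ≤ C ‖c‖_{ℓ²_{3/4}}. (In other words, ℓ²_{3/4} embeds continuously into the space ℋ₀.) -/

import Mathlib

open MeasureTheory Filter Finset

noncomputable def Ecoef (m : ℕ) : ℝ :=
  (Nat.factorial (2*m)) / (2^(2*m) * (Nat.factorial m)^2)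

def InEll2 (r : ℝ) (c : ℕ → ℝ) : Prop :=
  Summable (fun n : ℕ => ((1:ℝ) + n) ^ (2*r) * (c n)^2)

noncomputable def ell2Norm (r : ℝ) (c : ℕ → ℝ) : ℝ :=
  Real.sqrt (∑' n : ℕ, ((1:ℝ) + n) ^ (2*r) * (c n)^2)

lemma Ecoef_zero : Ecoef 0 = 1 := by simp [Ecoef]

lemma Ecoef_pos (m : ℕ) : 0 < Ecoef m := by
  apply div_pos
  · exact_mod_cast Nat.factorial_pos _
  · positivity

lemma Ecoef_succ (m : ℕ) : Ecoef (m+1) = (2*m+1)/(2*(m+1)) * Ecoef m := by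
  have h1 : 2*(m+1) = 2*m + 1 + 1 := by ring
  have hf : (Nat.factorial (2*(m+1)) : ℝ) = (2*m+2) * (2*m+1) * Nat.factorial (2*m) := by
    rw [h1]
    push_cast [Nat.factorial_succ]
    ring
  have hm : (Nat.factorial (m+1) : ℝ) = (m+1) * Nat.factorial m := by
    push_cast [Nat.factorial_succ]; ring
  have hfm : (0:ℝ) < Nat.factorial m := by exact_mod_cast Nat.factorial_pos m
  unfold Ecoef
  rw [hf, hm]
  have h2 : (2:ℝ)^(2*(m+1)) = 4 * 2^(2*m) := by rw [h1]; ring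
  rw [h2]
  field_simp
  ring

lemma Ecoef_mono (m : ℕ) : Ecoef (m+1) ≤ Ecoef m := by
  rw [Ecoef_succ]
  have hE := Ecoef_pos m
  have h : (2*(m:ℝ)+1)/(2*((m:ℝ)+1)) ≤ 1 := by
    rw [div_le_one (by positivity)]; linarith
  calc (2*(m:ℝ)+1)/(2*((m:ℝ)+1)) * Ecoef m ≤ 1 * Ecoef m := by
        exact mul_le_mul_of_nonneg_right h hE.le
    _ = Ecoef m := one_mul _

lemma Ecoef_sq_le (m : ℕ) : (Ecoef m)^2 ≤ 1/(m+1) := by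
  induction m with
  | zero => simp [Ecoef_zero]
  | succ m ih =>
    rw [Ecoef_succ]
    have h1 : (0:ℝ) < (m:ℝ)+1 := by positivity
    have h2 : (0:ℝ) < (m:ℝ)+2 := by positivity
    rw [mul_pow, div_pow]
    push_cast
    have hE := (Ecoef_pos m).le
    have key : (2*(m:ℝ)+1)^2 * ((m:ℝ)+2) ≤ (2*((m:ℝ)+1))^2 * ((m:ℝ)+1) := by nlinarith
    have h3 : (0:ℝ) < (2*((m:ℝ)+1))^2 := by positivity
    rw [div_mul_eq_mul_div, div_le_div_iff₀ h3 (by positivity : (0:ℝ) < (m:ℝ)+1+1)]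
    have h4 : Ecoef m ^2 * ((m:ℝ)+1) ≤ 1 := by
      rw [← le_div_iff₀ (by positivity : (0:ℝ) < (m:ℝ)+1)] at *
      simpa [one_div] using ih
    nlinarith [sq_nonneg (Ecoef m)]

lemma Ecoef_anti : ∀ {a b : ℕ}, a ≤ b → Ecoef b ≤ Ecoef a := by
  intro a b h
  induction b with
  | zero => simp_all
  | succ b ih =>
    rcases Nat.lt_or_ge a (b+1) with h'|h'
    · exact le_trans (Ecoef_mono b) (ih (Nat.lt_succ_iff.mp h'))
    · have : a = b+1 := le_antisymm h h'
      simp [this]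

lemma Ecoef_le_one (m : ℕ) : Ecoef m ≤ 1 := by
  simpa [Ecoef_zero] using Ecoef_anti (Nat.zero_le m)

lemma Ecoef_le_sqrt (m : ℕ) : Ecoef m ≤ ((m:ℝ)+1) ^ (-(1/2) : ℝ) := by
  have h1 : (0:ℝ) < (m:ℝ)+1 := by positivity
  rw [Real.rpow_neg h1.le, ← Real.sqrt_eq_rpow]
  have h2 : Real.sqrt ((m:ℝ)+1) > 0 := Real.sqrt_pos.mpr h1
  rw [← one_div, le_div_iff₀ h2]
  have h3 : Ecoef m ^2 * ((m:ℝ)+1) ≤ 1 := by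
    have := Ecoef_sq_le m
    rw [div_eq_inv_mul, mul_one] at this
    calc Ecoef m ^2 * ((m:ℝ)+1) ≤ ((m:ℝ)+1)⁻¹ * ((m:ℝ)+1) := by
          exact mul_le_mul_of_nonneg_right this h1.le
      _ = 1 := inv_mul_cancel₀ h1.ne'
  nlinarith [Real.sq_sqrt h1.le, Ecoef_pos m, h2, mul_pos (Ecoef_pos m) h2]

lemma Ecoef_tendsto : Filter.Tendsto Ecoef Filter.atTop (nhds 0) := by
  have h1 : Filter.Tendsto (fun m : ℕ => ((m:ℝ)+1) ^ (-(1/2) : ℝ)) Filter.atTop (nhds 0) :=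
    (tendsto_rpow_neg_atTop (by norm_num : (0:ℝ) < 1/2)).comp
      (Filter.tendsto_atTop_add_const_right _ 1 tendsto_natCast_atTop_atTop)
  exact squeeze_zero (fun m => (Ecoef_pos m).le) (fun m => Ecoef_le_sqrt m) h1

noncomputable def Scoef (m : ℕ) : ℝ := ∑ j ∈ Finset.range (m+1), Ecoef j * Ecoef (m-j)

lemma Ecoef_rec (i : ℕ) : 2*((i:ℝ)+1) * Ecoef (i+1) = (2*i+1) * Ecoef i := by
  rw [Ecoef_succ]
  have : ((i:ℝ)+1) ≠ 0 := by positivity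
  field_simp

lemma Scoef_reflect (M : ℕ) :
    2 * ∑ j ∈ range (M+1), (j:ℝ) * (Ecoef j * Ecoef (M-j)) = M * Scoef M := by
  have h := Finset.sum_range_reflect (fun j => (j:ℝ) * (Ecoef j * Ecoef (M-j))) (M+1)
  simp only [Nat.add_sub_cancel] at h
  have : 2 * ∑ j ∈ range (M+1), (j:ℝ) * (Ecoef j * Ecoef (M-j))
      = ∑ j ∈ range (M+1), (((M-j : ℕ):ℝ) * (Ecoef (M-j) * Ecoef (M-(M-j)))
          + (j:ℝ) * (Ecoef j * Ecoef (M-j))) := by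
    rw [Finset.sum_add_distrib, h]
    ring
  rw [this, Scoef, Finset.mul_sum]
  apply Finset.sum_congr rfl
  intro j hj
  have hjM : j ≤ M := Nat.lt_succ_iff.mp (Finset.mem_range.mp hj)
  rw [Nat.sub_sub_self hjM, Nat.cast_sub hjM]
  ring

lemma Scoef_one (M : ℕ) : Scoef M = 1 := by
  induction M with
  | zero => simp [Scoef, Ecoef_zero]
  | succ m ih =>
    have h1 : ((m:ℝ)+1) * Scoef (m+1)
        = 2 * ∑ j ∈ range (m+2), (j:ℝ) * (Ecoef j * Ecoef (m+1-j)) := by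
      have := Scoef_reflect (m+1)
      push_cast at this
      rw [this]
    have h2 : (∑ j ∈ range (m+2), 2 * ((j:ℝ) * (Ecoef j * Ecoef (m+1-j))))
        = ∑ i ∈ range (m+1), (2*(i:ℝ)+1) * (Ecoef i * Ecoef (m-i)) := by
      rw [Finset.sum_range_succ']
      simp only [Nat.cast_zero, zero_mul, mul_zero, add_zero]
      apply Finset.sum_congr rfl
      intro i _
      have hsub : m + 1 - (i+1) = m - i := by omega
      rw [hsub]
      push_cast
      linear_combination Ecoef (m-i) * Ecoef_rec i
    have h3 : (∑ i ∈ range (m+1), (2*(i:ℝ)+1) * (Ecoef i * Ecoef (m-i)))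
        = ((m:ℝ)+1) * Scoef m := by
      have hrefl := Scoef_reflect m
      have : (∑ i ∈ range (m+1), (2*(i:ℝ)+1) * (Ecoef i * Ecoef (m-i)))
          = 2 * (∑ i ∈ range (m+1), (i:ℝ) * (Ecoef i * Ecoef (m-i))) + Scoef m := by
        rw [Finset.mul_sum, Scoef, ← Finset.sum_add_distrib]
        apply Finset.sum_congr rfl
        intro i _
        ring
      rw [this, hrefl]
      ring
    have h4 : ((m:ℝ)+1) * Scoef (m+1) = ((m:ℝ)+1) * Scoef m := by
      rw [h1, Finset.mul_sum, h2, h3]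
    have h5 : ((m:ℝ)+1) ≠ 0 := by positivity
    have := mul_left_cancel₀ h5 h4
    rw [this, ih]

noncomputable def Dcoef : ℕ → ℝ := fun m => if m = 0 then 1 else Ecoef m - Ecoef (m-1)

lemma Dcoef_zero : Dcoef 0 = 1 := by simp [Dcoef]

lemma Dcoef_succ (m : ℕ) : Dcoef (m+1) = Ecoef (m+1) - Ecoef m := by simp [Dcoef]

lemma ED (m : ℕ) : ∑ i ∈ range (m+1), Ecoef (m-i) * Dcoef i = if m = 0 then 1 else 0 := by
  cases m with
  | zero => simp [Dcoef_zero, Ecoef_zero]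
  | succ m =>
    simp only [Nat.succ_ne_zero, if_false]
    rw [Finset.sum_range_succ']
    simp only [Nat.succ_sub_succ_eq_sub, Nat.sub_zero, Dcoef_zero, mul_one]
    have key : ∑ i ∈ range (m+1), Ecoef (m - i) * Ecoef (i+1) = 1 - Ecoef (m+1) := by
      have hS := Scoef_one (m+1)
      rw [Scoef, Finset.sum_range_succ'] at hS
      simp only [Nat.succ_sub_succ_eq_sub, Nat.sub_zero, Ecoef_zero, one_mul] at hS
      have h2 : ∑ i ∈ range (m+1), Ecoef (m - i) * Ecoef (i+1)
          = ∑ i ∈ range (m+1), Ecoef (i+1) * Ecoef (m - i) := by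
        apply Finset.sum_congr rfl; intros; ring
      rw [h2]; linarith
    have key2 : ∑ i ∈ range (m+1), Ecoef (m - i) * Ecoef i = 1 := by
      have hS := Scoef_one m
      rw [Scoef] at hS
      rw [← hS]; apply Finset.sum_congr rfl; intros; ring
    have h3 : ∑ i ∈ range (m+1), Ecoef (m - i) * Dcoef (i+1)
        = (∑ i ∈ range (m+1), Ecoef (m - i) * Ecoef (i+1))
          - ∑ i ∈ range (m+1), Ecoef (m - i) * Ecoef i := by
      rw [← Finset.sum_sub_distrib]
      apply Finset.sum_congr rfl
      intro i _
      rw [Dcoef_succ]; ring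
    rw [h3, key, key2]
    ring

lemma Dsum_partial (M : ℕ) : ∑ m ∈ range (M+1), Dcoef m = Ecoef M := by
  induction M with
  | zero => simp [Dcoef_zero, Ecoef_zero]
  | succ M ih => rw [Finset.sum_range_succ, ih, Dcoef_succ]; ring

lemma Dabs_succ (m : ℕ) : |Dcoef (m+1)| = Ecoef m - Ecoef (m+1) := by
  rw [Dcoef_succ, abs_sub_comm, abs_of_nonneg (by linarith [Ecoef_mono m])]

lemma Dabs_partial_eq (M : ℕ) : ∑ m ∈ range (M+1), |Dcoef m| = 2 - Ecoef M := by
  induction M with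
  | zero => simp [Dcoef_zero, Ecoef_zero]; norm_num
  | succ M ih => rw [Finset.sum_range_succ, ih, Dabs_succ]; ring

lemma Dabs_partial (N : ℕ) : ∑ m ∈ range N, |Dcoef m| ≤ 2 := by
  cases N with
  | zero => simp
  | succ M => rw [Dabs_partial_eq]; linarith [Ecoef_pos M]

lemma Dabs_summable : Summable (fun m => |Dcoef m|) :=
  summable_of_sum_range_le (fun _ => abs_nonneg _) Dabs_partial

lemma D_summable : Summable Dcoef := Dabs_summable.of_abs

lemma D_tsum_zero : ∑' m, Dcoef m = 0 := by
  have h1 : Filter.Tendsto (fun N => ∑ m ∈ range N, Dcoef m) Filter.atTop (nhds (∑' m, Dcoef m)) :=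
    D_summable.hasSum.tendsto_sum_nat
  have h2 : Filter.Tendsto (fun N => ∑ m ∈ range N, Dcoef m) Filter.atTop (nhds 0) := by
    have h3 : Filter.Tendsto (fun N : ℕ => Ecoef (N-1)) Filter.atTop (nhds 0) :=
      Ecoef_tendsto.comp (Filter.tendsto_sub_atTop_nat 1)
    apply h3.congr'
    filter_upwards [Filter.eventually_ge_atTop 1] with N hN
    obtain ⟨M, rfl⟩ := Nat.exists_eq_add_of_le hN
    rw [add_comm 1 M, Dsum_partial]
    norm_num
  exact tendsto_nhds_unique h1 h2

noncomputable def wfun (n : ℕ) : ℝ := ((1:ℝ)+n) * Real.sqrt ((1:ℝ)+n)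

noncomputable def vfun (n : ℕ) : ℝ := Real.sqrt (wfun n)

lemma wfun_pos (n : ℕ) : 0 < wfun n := by
  have h : (0:ℝ) < 1 + n := by positivity
  exact mul_pos h (Real.sqrt_pos.mpr h)

lemma vfun_pos (n : ℕ) : 0 < vfun n := Real.sqrt_pos.mpr (wfun_pos n)

lemma vfun_sq (n : ℕ) : vfun n ^ 2 = wfun n := Real.sq_sqrt (wfun_pos n).le

lemma wfun_zero : wfun 0 = 1 := by simp [wfun]

lemma weight_eq (n : ℕ) : ((1:ℝ)+n) ^ (2*(3/4) : ℝ) = wfun n := by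
  have h : (0:ℝ) < 1 + n := by positivity
  rw [show (2*(3/4) : ℝ) = 1 + 1/2 by norm_num, Real.rpow_add h, Real.rpow_one,
    ← Real.sqrt_eq_rpow, wfun]

lemma smul_sqrt_mono {s t : ℝ} (hs : 0 ≤ s) (hst : s ≤ t) :
    s * Real.sqrt s ≤ t * Real.sqrt t :=
  mul_le_mul hst (Real.sqrt_le_sqrt hst) (Real.sqrt_nonneg s) (le_trans hs hst)

lemma tele_aux {a b : ℝ} (ha : 0 < a) (hab : a ≤ b) (h : b^2 = a^2 + 1) :
    1/(b^2*b) ≤ 2/a - 2/b := by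
  have hb : 0 < b := lt_of_lt_of_le ha hab
  rw [div_sub_div _ _ (ne_of_gt ha) (ne_of_gt hb), div_le_div_iff₀ (by positivity) (by positivity)]
  have hba : (b-a)*(b+a) = 1 := by nlinarith
  nlinarith [sq_nonneg ((b-a)*b), mul_pos ha hb, mul_nonneg (mul_nonneg (sub_nonneg.2 hab) hb.le) hb.le]

lemma inv_wfun_succ_le (N : ℕ) :
    1 / wfun (N+1) ≤ 2/Real.sqrt ((N:ℝ)+1) - 2/Real.sqrt ((N:ℝ)+2) := by
  have h1 : (0:ℝ) < (N:ℝ)+1 := by positivity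
  have h2 : (0:ℝ) < (N:ℝ)+2 := by positivity
  have ha : 0 < Real.sqrt ((N:ℝ)+1) := Real.sqrt_pos.mpr h1
  have hab : Real.sqrt ((N:ℝ)+1) ≤ Real.sqrt ((N:ℝ)+2) := Real.sqrt_le_sqrt (by linarith)
  have hsq : Real.sqrt ((N:ℝ)+2)^2 = Real.sqrt ((N:ℝ)+1)^2 + 1 := by
    rw [Real.sq_sqrt h1.le, Real.sq_sqrt h2.le]; ring
  have := tele_aux ha hab hsq
  have hw : wfun (N+1) = Real.sqrt ((N:ℝ)+2)^2 * Real.sqrt ((N:ℝ)+2) := by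
    rw [wfun, Real.sq_sqrt h2.le]
    push_cast
    ring_nf
  rw [hw]
  exact this

lemma sum_inv_wfun_aux (N : ℕ) :
    ∑ k ∈ range (N+1), 1 / wfun k ≤ 3 - 2/Real.sqrt ((N:ℝ)+1) := by
  induction N with
  | zero => simp [wfun_zero]; norm_num
  | succ N ih =>
    rw [Finset.sum_range_succ]
    have h := inv_wfun_succ_le N
    push_cast
    push_cast at ih h
    rw [show ((N:ℝ)+2) = (N:ℝ)+1+1 by ring] at h
    linarith

lemma sum_inv_wfun (N : ℕ) : ∑ k ∈ range N, 1 / wfun k ≤ 3 := by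
  cases N with
  | zero => simp
  | succ N =>
    have := sum_inv_wfun_aux N
    have h : 0 < Real.sqrt ((N:ℝ)+1) := Real.sqrt_pos.mpr (by positivity)
    have : 2/Real.sqrt ((N:ℝ)+1) > 0 := by positivity
    linarith [sum_inv_wfun_aux N]

lemma Dcoef_succ_eq (m : ℕ) : Dcoef (m+1) = -(Ecoef m / (2*((m:ℝ)+1))) := by
  rw [Dcoef_succ, Ecoef_succ]
  have h : ((m:ℝ)+1) ≠ 0 := by positivity
  field_simp
  ring

lemma bsq_succ_le (m : ℕ) : wfun (m+1) * Dcoef (m+1)^2 ≤ 2 / wfun (m+1) := by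
  have h1 : (0:ℝ) < (m:ℝ)+1 := by positivity
  have hEm : Ecoef m ^2 * ((m:ℝ)+1) ≤ 1 := by
    have := Ecoef_sq_le m
    rw [div_eq_inv_mul, mul_one] at this
    calc Ecoef m ^2 * ((m:ℝ)+1) ≤ ((m:ℝ)+1)⁻¹ * ((m:ℝ)+1) :=
          mul_le_mul_of_nonneg_right this h1.le
      _ = 1 := inv_mul_cancel₀ h1.ne'
  have hDsq : Dcoef (m+1)^2 ≤ 1/(4*((m:ℝ)+1)^3) := by
    have he : Dcoef (m+1)^2 = Ecoef m^2 / (4*((m:ℝ)+1)^2) := by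
      rw [Dcoef_succ_eq, neg_sq, div_pow]
      congr 1
      ring
    rw [he, div_le_div_iff₀ (by positivity) (by positivity)]
    nlinarith [sq_nonneg (Ecoef m), h1, mul_pos h1 h1]
  have hwpos := wfun_pos (m+1)
  have hwsq : wfun (m+1)^2 = ((m:ℝ)+2)^3 := by
    have h2 : (0:ℝ) ≤ (1:ℝ) + ((m+1:ℕ):ℝ) := by positivity
    rw [wfun, mul_pow, Real.sq_sqrt h2]
    push_cast
    ring
  rw [le_div_iff₀ hwpos]
  calc wfun (m+1) * Dcoef (m+1)^2 * wfun (m+1)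
      = wfun (m+1)^2 * Dcoef (m+1)^2 := by ring
    _ ≤ ((m:ℝ)+2)^3 * (1/(4*((m:ℝ)+1)^3)) := by
        rw [hwsq]
        exact mul_le_mul_of_nonneg_left hDsq (by positivity)
    _ ≤ 2 := by
        rw [mul_one_div, div_le_iff₀ (by positivity)]
        have hcube : ((m:ℝ)+2)^3 ≤ (2*((m:ℝ)+1))^3 :=
          pow_le_pow_left₀ (by positivity) (by linarith) 3
        nlinarith [hcube]

lemma bsq_partial (N : ℕ) : ∑ m ∈ range N, wfun m * Dcoef m^2 ≤ 7 := by
  cases N with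
  | zero => simp
  | succ N =>
    rw [Finset.sum_range_succ']
    have h0 : wfun 0 * Dcoef 0 ^2 = 1 := by rw [wfun_zero, Dcoef_zero]; ring
    have hsum : ∑ i ∈ range N, wfun (i+1) * Dcoef (i+1)^2
        ≤ ∑ i ∈ range N, 2/wfun (i+1) := Finset.sum_le_sum (fun i _ => bsq_succ_le i)
    have h2 : ∑ i ∈ range N, 2/wfun (i+1) = 2 * ∑ i ∈ range N, 1/wfun (i+1) := by
      rw [Finset.mul_sum]
      apply Finset.sum_congr rfl
      intros; ring
    have h3 : ∑ i ∈ range N, 1/wfun (i+1) ≤ 3 := by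
      have h4 := sum_inv_wfun (N+1)
      rw [Finset.sum_range_succ'] at h4
      have h5 : 0 ≤ 1/wfun 0 := le_of_lt (div_pos one_pos (wfun_pos 0))
      linarith
    linarith

lemma tri {M : Type*} [AddCommMonoid M] (F : ℕ → ℕ → M) (N : ℕ) :
    ∑ n ∈ range N, ∑ k ∈ range (n+1), F n k = ∑ k ∈ range N, ∑ n ∈ Ico k N, F n k := by
  induction N with
  | zero => simp
  | succ N ih =>
    rw [Finset.sum_range_succ, ih,
      Finset.sum_range_succ (fun k => ∑ n ∈ Ico k (N+1), F n k) N]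
    have h1 : ∑ k ∈ range N, ∑ n ∈ Ico k (N+1), F n k
        = ∑ k ∈ range N, ((∑ n ∈ Ico k N, F n k) + F N k) := by
      apply Finset.sum_congr rfl
      intro k hk
      rw [Finset.sum_Ico_succ_top (Nat.le_of_lt (Finset.mem_range.mp hk))]
    rw [h1, Finset.sum_add_distrib, Nat.Ico_succ_singleton, Finset.sum_singleton,
      Finset.sum_range_succ (F N) N]
    abel

lemma conv_partial_le (G h : ℕ → ℝ) (hh : ∀ k, 0 ≤ h k) (A : ℝ)
    (hG : ∀ M, ∑ m ∈ range M, G m ≤ A) (N : ℕ) :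
    ∑ n ∈ range N, ∑ k ∈ range (n+1), G (n-k) * h k ≤ A * ∑ k ∈ range N, h k := by
  rw [tri]
  have step : ∀ k ∈ range N, ∑ n ∈ Ico k N, G (n-k) * h k ≤ A * h k := by
    intro k hk
    rw [Finset.sum_Ico_eq_sum_range]
    have he : ∑ i ∈ range (N-k), G (k+i-k) * h k = (∑ i ∈ range (N-k), G i) * h k := by
      rw [Finset.sum_mul]
      apply Finset.sum_congr rfl
      intro i _
      congr 2
      omega
    rw [he]
    exact mul_le_mul_of_nonneg_right (hG _) (hh k)
  calc ∑ k ∈ range N, ∑ n ∈ Ico k N, G (n-k) * h k ≤ ∑ k ∈ range N, A * h k :=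
        Finset.sum_le_sum step
    _ = A * ∑ k ∈ range N, h k := (Finset.mul_sum _ _ _).symm

lemma CS2 (s : Finset ℕ) (u v : ℕ → ℝ) (hu : ∀ k, 0 ≤ u k) :
    (∑ k ∈ s, u k * v k)^2 ≤ (∑ k ∈ s, u k) * ∑ k ∈ s, u k * (v k)^2 := by
  have h := Finset.sum_mul_sq_le_sq_mul_sq s (fun k => Real.sqrt (u k))
    (fun k => Real.sqrt (u k) * v k)
  have e1 : ∑ k ∈ s, Real.sqrt (u k) * (Real.sqrt (u k) * v k) = ∑ k ∈ s, u k * v k := by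
    apply Finset.sum_congr rfl
    intro k _
    rw [← mul_assoc, Real.mul_self_sqrt (hu k)]
  have e2 : ∑ k ∈ s, Real.sqrt (u k) ^ 2 = ∑ k ∈ s, u k := by
    apply Finset.sum_congr rfl
    intro k _
    rw [Real.sq_sqrt (hu k)]
  have e3 : ∑ k ∈ s, (Real.sqrt (u k) * v k) ^ 2 = ∑ k ∈ s, u k * (v k)^2 := by
    apply Finset.sum_congr rfl
    intro k _
    rw [mul_pow, Real.sq_sqrt (hu k)]
  rw [e1, e2, e3] at h
  exact h

lemma vfun_le {n k : ℕ} (hk : k ≤ n) : vfun n ≤ 2 * vfun k + 2 * vfun (n - k) := by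
  have key : ∀ j : ℕ, ((1:ℝ)+n) ≤ 2*((1:ℝ)+j) → vfun n ≤ 2 * vfun j := by
    intro j hj
    have hx : (0:ℝ) ≤ (1:ℝ)+(n:ℝ) := by positivity
    have hy : (0:ℝ) < (1:ℝ)+(j:ℝ) := by positivity
    have h1 : wfun n ≤ 4 * wfun j := by
      have h2 : wfun n ≤ (2*((1:ℝ)+j)) * Real.sqrt (2*((1:ℝ)+j)) := smul_sqrt_mono hx hj
      have h3 : Real.sqrt (2*((1:ℝ)+j)) ≤ 2 * Real.sqrt ((1:ℝ)+j) := by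
        calc Real.sqrt (2*((1:ℝ)+j)) ≤ Real.sqrt (4*((1:ℝ)+j)) :=
              Real.sqrt_le_sqrt (by linarith)
          _ = 2 * Real.sqrt ((1:ℝ)+j) := by
              rw [show (4:ℝ)*((1:ℝ)+j) = (2*Real.sqrt ((1:ℝ)+j))^2 by
                rw [mul_pow, Real.sq_sqrt hy.le]; norm_num]
              exact Real.sqrt_sq (by positivity)
      calc wfun n ≤ (2*((1:ℝ)+j)) * Real.sqrt (2*((1:ℝ)+j)) := h2
        _ ≤ (2*((1:ℝ)+j)) * (2 * Real.sqrt ((1:ℝ)+j)) :=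
            mul_le_mul_of_nonneg_left h3 (by positivity)
        _ = 4 * wfun j := by rw [wfun]; ring
    calc vfun n = Real.sqrt (wfun n) := rfl
      _ ≤ Real.sqrt (4 * wfun j) := Real.sqrt_le_sqrt h1
      _ = 2 * vfun j := by
          rw [show (4:ℝ) * wfun j = (2*vfun j)^2 by
            rw [mul_pow, vfun_sq]; norm_num]
          exact Real.sqrt_sq (by linarith [vfun_pos j])
  have hcast : ((n-k:ℕ):ℝ) = (n:ℝ) - k := by
    rw [Nat.cast_sub hk]
  rcases le_total ((1:ℝ)+(k:ℝ)) ((1:ℝ)+((n-k:ℕ):ℝ)) with hle | hle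
  · have : ((1:ℝ)+n) ≤ 2*((1:ℝ)+((n-k:ℕ):ℝ)) := by
      rw [hcast] at *
      have : (k:ℝ) ≤ n := by exact_mod_cast hk
      linarith
    have h := key (n-k) this
    linarith [vfun_pos k]
  · have : ((1:ℝ)+n) ≤ 2*((1:ℝ)+(k:ℝ)) := by
      rw [hcast] at hle
      have : (k:ℝ) ≤ n := by exact_mod_cast hk
      linarith
    have h := key k this
    linarith [vfun_pos (n-k)]

set_option maxHeartbeats 2000000 in
/-- `ℓ²_{3/4}` embeds continuously into `ℋ₀`: every `c ∈ ℓ²_{3/4}` can be written as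
`c_n = ∑_{k=0}^n E_{n-k} f_k` with `f ∈ ℓ²_{3/4}`, `∑ f_k = 0` (absolutely convergent),
and `‖f‖ ≤ C ‖c‖` for an absolute constant `C`. -/
theorem stmt1 :
    ∃ C > 0, ∀ c : ℕ → ℝ, InEll2 (3/4) c →
      ∃ f : ℕ → ℝ, InEll2 (3/4) f ∧ Summable (fun k => |f k|) ∧ (∑' k, f k) = 0 ∧
        (∀ n, c n = ∑ k ∈ Finset.range (n+1), Ecoef (n-k) * f k) ∧
        ell2Norm (3/4) f ≤ C * ell2Norm (3/4) c := by
  refine ⟨15, by norm_num, ?_⟩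
  intro c hc
  set f : ℕ → ℝ := fun n => ∑ k ∈ range (n+1), Dcoef (n-k) * c k with hfdef
  have hwbridge : ∀ g : ℕ → ℝ,
      (fun n : ℕ => ((1:ℝ)+n) ^ (2*(3/4) : ℝ) * (g n)^2) = fun n => wfun n * (g n)^2 := by
    intro g; funext n; rw [weight_eq]
  have hcsum : Summable (fun n => wfun n * (c n)^2) := by
    have := hc
    rw [InEll2, hwbridge c] at this
    exact this
  set Sc : ℝ := ∑' n, wfun n * (c n)^2 with hScdef
  have hterm_nn : ∀ g : ℕ → ℝ, ∀ n, 0 ≤ wfun n * (g n)^2 :=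
    fun g n => mul_nonneg (wfun_pos n).le (sq_nonneg _)
  have hScnn : 0 ≤ Sc := tsum_nonneg (hterm_nn c)
  have hpc : ∀ N, ∑ k ∈ range N, wfun k * (c k)^2 ≤ Sc := fun N =>
    Summable.sum_le_tsum (range N) (fun i _ => hterm_nn c i) hcsum
  set L : ℝ := Real.sqrt (3*Sc) with hLdef
  have hLnn : 0 ≤ L := Real.sqrt_nonneg _
  have hLsq : L^2 = 3*Sc := Real.sq_sqrt (by linarith)
  -- ℓ¹ bound on c
  have hL : ∀ N, ∑ k ∈ range N, |c k| ≤ L := by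
    intro N
    have hCS := Finset.sum_mul_sq_le_sq_mul_sq (range N) (fun k => 1/vfun k)
      (fun k => vfun k * |c k|)
    have e1 : ∑ k ∈ range N, (1/vfun k) * (vfun k * |c k|) = ∑ k ∈ range N, |c k| := by
      apply Finset.sum_congr rfl
      intro k _
      rw [← mul_assoc, one_div, inv_mul_cancel₀ (vfun_pos k).ne', one_mul]
    have e2 : ∑ k ∈ range N, (1/vfun k)^2 = ∑ k ∈ range N, 1/wfun k := by
      apply Finset.sum_congr rfl
      intro k _
      rw [div_pow, one_pow, vfun_sq]
    have e3 : ∑ k ∈ range N, (vfun k * |c k|)^2 = ∑ k ∈ range N, wfun k * (c k)^2 := by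
      apply Finset.sum_congr rfl
      intro k _
      rw [mul_pow, vfun_sq, sq_abs]
    rw [e1, e2, e3] at hCS
    have h4 : (∑ k ∈ range N, |c k|)^2 ≤ 3 * Sc := by
      calc (∑ k ∈ range N, |c k|)^2 ≤ (∑ k ∈ range N, 1/wfun k) * ∑ k ∈ range N, wfun k * (c k)^2 := hCS
        _ ≤ 3 * Sc := by
            apply mul_le_mul (sum_inv_wfun N) (hpc N)
              (Finset.sum_nonneg fun k _ => hterm_nn c k) (by norm_num)
    rw [hLdef, Real.le_sqrt (Finset.sum_nonneg fun k _ => abs_nonneg _) (by linarith)]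
    exact h4
  have hc_l1 : Summable (fun k => |c k|) :=
    summable_of_sum_range_le (fun _ => abs_nonneg _) hL
  have hcnorm : Summable (fun k => ‖c k‖) := by simpa [Real.norm_eq_abs] using hc_l1
  have hDnorm : Summable (fun m => ‖Dcoef m‖) := by
    simpa [Real.norm_eq_abs] using Dabs_summable
  -- ℓ¹ summability of f
  have hf_bound : ∀ n, |f n| ≤ ∑ k ∈ range (n+1), |c k| * |Dcoef (n-k)| := by
    intro n
    calc |f n| ≤ ∑ k ∈ range (n+1), |Dcoef (n-k) * c k| := Finset.abs_sum_le_sum_abs _ _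
      _ = ∑ k ∈ range (n+1), |c k| * |Dcoef (n-k)| := by
          apply Finset.sum_congr rfl
          intro k _
          rw [abs_mul, mul_comm]
  have hFsum : Summable fun n => ‖∑ k ∈ range (n+1), |c k| * |Dcoef (n-k)|‖ :=
    summable_norm_sum_mul_range_of_summable_norm (f := fun k => |c k|)
      (g := fun m => |Dcoef m|)
      (by simpa [Real.norm_eq_abs] using hc_l1) (by simpa [Real.norm_eq_abs] using Dabs_summable)
  have hf_l1 : Summable (fun k => |f k|) := by
    apply Summable.of_nonneg_of_le (fun n => abs_nonneg _) ?_ hFsum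
    intro n
    calc |f n| ≤ ∑ k ∈ range (n+1), |c k| * |Dcoef (n-k)| := hf_bound n
      _ ≤ ‖∑ k ∈ range (n+1), |c k| * |Dcoef (n-k)|‖ := le_abs_self _
  -- tsum f = 0
  have hf_tsum : (∑' k, f k) = 0 := by
    have hprod := tsum_mul_tsum_eq_tsum_sum_range_of_summable_norm (f := c) (g := Dcoef) hcnorm hDnorm
    have he : (fun n => ∑ k ∈ range (n+1), c k * Dcoef (n-k)) = f := by
      funext n
      apply Finset.sum_congr rfl
      intro k _
      rw [mul_comm]
    rw [he, D_tsum_zero, mul_zero] at hprod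
    exact hprod.symm
  -- convolution identity
  have hconv : ∀ n, c n = ∑ k ∈ range (n+1), Ecoef (n-k) * f k := by
    intro n
    have h1 : ∑ k ∈ range (n+1), Ecoef (n-k) * f k
        = ∑ k ∈ range (n+1), ∑ j ∈ range (k+1), Ecoef (n-k) * (Dcoef (k-j) * c j) := by
      apply Finset.sum_congr rfl
      intro k _
      rw [hfdef, Finset.mul_sum]
    rw [h1, tri (fun k j => Ecoef (n-k) * (Dcoef (k-j) * c j)) (n+1)]
    have h2 : ∀ j ∈ range (n+1),
        ∑ k ∈ Ico j (n+1), Ecoef (n-k) * (Dcoef (k-j) * c j)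
        = (if n - j = 0 then 1 else 0) * c j := by
      intro j hj
      have hjn : j ≤ n := Nat.lt_succ_iff.mp (Finset.mem_range.mp hj)
      rw [Finset.sum_Ico_eq_sum_range]
      have h3 : n + 1 - j = (n - j) + 1 := by omega
      rw [h3]
      have h4 : ∑ i ∈ range ((n-j)+1), Ecoef (n-(j+i)) * (Dcoef ((j+i)-j) * c j)
          = (∑ i ∈ range ((n-j)+1), Ecoef ((n-j)-i) * Dcoef i) * c j := by
        rw [Finset.sum_mul]
        apply Finset.sum_congr rfl
        intro i _
        have e1 : n - (j+i) = (n-j) - i := by omega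
        have e2 : (j+i) - j = i := by omega
        rw [e1, e2]
        ring
      rw [h4, ED (n-j)]
    rw [Finset.sum_congr rfl h2]
    rw [Finset.sum_eq_single_of_mem n (Finset.self_mem_range_succ n)]
    · simp
    · intro j hj hjne
      have : n - j ≠ 0 := by
        have := Finset.mem_range.mp hj
        omega
      simp [this]
  -- main estimate
  set aa : ℕ → ℝ := fun k => vfun k * |c k| with hadef
  set bb : ℕ → ℝ := fun m => vfun m * |Dcoef m| with hbdef
  set Q : ℕ → ℝ := fun n => ∑ k ∈ range (n+1), |Dcoef (n-k)| * aa k with hQdef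
  set P : ℕ → ℝ := fun n => ∑ k ∈ range (n+1), bb (n-k) * |c k| with hPdef
  have ha_sq : ∀ k, aa k ^ 2 = wfun k * (c k)^2 := by
    intro k
    simp only [hadef]
    rw [mul_pow, vfun_sq, sq_abs]
  have hbb_sq : ∀ m, bb m ^ 2 = wfun m * (Dcoef m)^2 := by
    intro m
    simp only [hbdef]
    rw [mul_pow, vfun_sq, sq_abs]
  have ha_nn : ∀ k, 0 ≤ aa k := fun k => mul_nonneg (vfun_pos k).le (abs_nonneg _)
  have hbb_nn : ∀ m, 0 ≤ bb m := fun m => mul_nonneg (vfun_pos m).le (abs_nonneg _)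
  have hQnn : ∀ n, 0 ≤ Q n := fun n =>
    Finset.sum_nonneg fun k _ => mul_nonneg (abs_nonneg _) (ha_nn k)
  have hPnn : ∀ n, 0 ≤ P n := fun n =>
    Finset.sum_nonneg fun k _ => mul_nonneg (hbb_nn _) (abs_nonneg _)
  have hpoint : ∀ n, wfun n * (f n)^2 ≤ 8 * Q n^2 + 8 * P n^2 := by
    intro n
    have h1 : vfun n * |f n| ≤ 2 * Q n + 2 * P n := by
      calc vfun n * |f n| ≤ vfun n * ∑ k ∈ range (n+1), |Dcoef (n-k)| * |c k| := by
            apply mul_le_mul_of_nonneg_left ?_ (vfun_pos n).le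
            calc |f n| ≤ ∑ k ∈ range (n+1), |Dcoef (n-k) * c k| :=
                  Finset.abs_sum_le_sum_abs _ _
              _ = ∑ k ∈ range (n+1), |Dcoef (n-k)| * |c k| := by
                  apply Finset.sum_congr rfl
                  intros
                  rw [abs_mul]
        _ = ∑ k ∈ range (n+1), vfun n * (|Dcoef (n-k)| * |c k|) := Finset.mul_sum _ _ _
        _ ≤ ∑ k ∈ range (n+1), (2*vfun k + 2*vfun (n-k)) * (|Dcoef (n-k)| * |c k|) := by
            apply Finset.sum_le_sum
            intro k hk
            have hkn : k ≤ n := Nat.lt_succ_iff.mp (Finset.mem_range.mp hk)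
            exact mul_le_mul_of_nonneg_right (vfun_le hkn)
              (mul_nonneg (abs_nonneg _) (abs_nonneg _))
        _ = 2 * Q n + 2 * P n := by
            simp only [hQdef, hPdef, hadef, hbdef]
            rw [Finset.mul_sum, Finset.mul_sum, ← Finset.sum_add_distrib]
            apply Finset.sum_congr rfl
            intros
            ring
    have h2 : wfun n * (f n)^2 = (vfun n * |f n|)^2 := by
      rw [mul_pow, vfun_sq, sq_abs]
    have h3 : (vfun n * |f n|)^2 ≤ (2*Q n + 2*P n)^2 :=
      pow_le_pow_left₀ (mul_nonneg (vfun_pos n).le (abs_nonneg _)) h1 2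
    rw [h2]
    nlinarith [sq_nonneg (Q n - P n), hQnn n, hPnn n]
  have hQsum : ∀ N, ∑ n ∈ range N, Q n^2 ≤ 4 * Sc := by
    intro N
    have hstep : ∀ n, Q n^2 ≤ 2 * ∑ k ∈ range (n+1), |Dcoef (n-k)| * (aa k)^2 := by
      intro n
      have hCS := CS2 (range (n+1)) (fun k => |Dcoef (n-k)|) aa (fun k => abs_nonneg _)
      have hDsum' : ∑ k ∈ range (n+1), |Dcoef (n-k)| ≤ 2 := by
        have hr := Finset.sum_range_reflect (fun m => |Dcoef m|) (n+1)
        calc ∑ k ∈ range (n+1), |Dcoef (n-k)| = ∑ j ∈ range (n+1), |Dcoef j| := by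
              rw [← hr]
              apply Finset.sum_congr rfl
              intro k hk
              congr 2
          _ ≤ 2 := Dabs_partial (n+1)
      calc Q n ^2 ≤ (∑ k ∈ range (n+1), |Dcoef (n-k)|)
            * ∑ k ∈ range (n+1), |Dcoef (n-k)| * (aa k)^2 := hCS
        _ ≤ 2 * ∑ k ∈ range (n+1), |Dcoef (n-k)| * (aa k)^2 :=
            mul_le_mul_of_nonneg_right hDsum'
              (Finset.sum_nonneg fun k _ => mul_nonneg (abs_nonneg _) (sq_nonneg _))
    calc ∑ n ∈ range N, Q n^2
        ≤ ∑ n ∈ range N, 2 * ∑ k ∈ range (n+1), |Dcoef (n-k)| * (aa k)^2 :=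
          Finset.sum_le_sum fun n _ => hstep n
      _ = 2 * ∑ n ∈ range N, ∑ k ∈ range (n+1), |Dcoef (n-k)| * (aa k)^2 :=
          (Finset.mul_sum _ _ _).symm
      _ ≤ 2 * (2 * ∑ k ∈ range N, (aa k)^2) := by
          apply mul_le_mul_of_nonneg_left ?_ (by norm_num : (0:ℝ) ≤ 2)
          exact conv_partial_le (fun m => |Dcoef m|) (fun k => (aa k)^2)
            (fun k => sq_nonneg _) 2 Dabs_partial N
      _ ≤ 4 * Sc := by
          have h5 : ∑ k ∈ range N, (aa k)^2 ≤ Sc := by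
            have : ∑ k ∈ range N, (aa k)^2 = ∑ k ∈ range N, wfun k * (c k)^2 :=
              Finset.sum_congr rfl fun k _ => ha_sq k
            rw [this]
            exact hpc N
          linarith
  have hbsq_partial : ∀ M, ∑ m ∈ range M, (bb m)^2 ≤ 7 := by
    intro M
    have : ∑ m ∈ range M, (bb m)^2 = ∑ m ∈ range M, wfun m * (Dcoef m)^2 :=
      Finset.sum_congr rfl fun m _ => hbb_sq m
    rw [this]
    exact bsq_partial M
  have hPsum : ∀ N, ∑ n ∈ range N, P n^2 ≤ 21 * Sc := by
    intro N
    have hstep : ∀ n, P n^2 ≤ L * ∑ k ∈ range (n+1), (bb (n-k))^2 * |c k| := by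
      intro n
      have hCS := CS2 (range (n+1)) (fun k => |c k|) (fun k => bb (n-k))
        (fun k => abs_nonneg _)
      have he : ∑ k ∈ range (n+1), |c k| * bb (n-k) = P n := by
        simp only [hPdef]
        apply Finset.sum_congr rfl
        intros
        ring
      have he2 : ∑ k ∈ range (n+1), |c k| * (bb (n-k))^2
          = ∑ k ∈ range (n+1), (bb (n-k))^2 * |c k| := by
        apply Finset.sum_congr rfl
        intros
        ring
      rw [he, he2] at hCS
      calc P n^2 ≤ (∑ k ∈ range (n+1), |c k|)
            * ∑ k ∈ range (n+1), (bb (n-k))^2 * |c k| := hCS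
        _ ≤ L * ∑ k ∈ range (n+1), (bb (n-k))^2 * |c k| :=
            mul_le_mul_of_nonneg_right (hL (n+1))
              (Finset.sum_nonneg fun k _ => mul_nonneg (sq_nonneg _) (abs_nonneg _))
    calc ∑ n ∈ range N, P n^2
        ≤ ∑ n ∈ range N, L * ∑ k ∈ range (n+1), (bb (n-k))^2 * |c k| :=
          Finset.sum_le_sum fun n _ => hstep n
      _ = L * ∑ n ∈ range N, ∑ k ∈ range (n+1), (bb (n-k))^2 * |c k| :=
          (Finset.mul_sum _ _ _).symm
      _ ≤ L * (7 * ∑ k ∈ range N, |c k|) := by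
          apply mul_le_mul_of_nonneg_left ?_ hLnn
          exact conv_partial_le (fun m => (bb m)^2) (fun k => |c k|)
            (fun k => abs_nonneg _) 7 hbsq_partial N
      _ ≤ L * (7 * L) := by
          apply mul_le_mul_of_nonneg_left ?_ hLnn
          have := hL N
          linarith
      _ = 7 * L^2 := by ring
      _ = 21 * Sc := by rw [hLsq]; ring
  have hT : ∀ N, ∑ n ∈ range N, wfun n * (f n)^2 ≤ 200 * Sc := by
    intro N
    calc ∑ n ∈ range N, wfun n * (f n)^2
        ≤ ∑ n ∈ range N, (8 * Q n^2 + 8 * P n^2) :=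
          Finset.sum_le_sum fun n _ => hpoint n
      _ = 8 * (∑ n ∈ range N, Q n^2) + 8 * (∑ n ∈ range N, P n^2) := by
          rw [Finset.sum_add_distrib, Finset.mul_sum, Finset.mul_sum]
      _ ≤ 8 * (4 * Sc) + 8 * (21 * Sc) := by
          have h6 := hQsum N
          have h7 := hPsum N
          have h8 : (0:ℝ) ≤ 8 := by norm_num
          nlinarith
      _ = 200 * Sc := by ring
  have hfsummable : Summable (fun n => wfun n * (f n)^2) :=
    summable_of_sum_range_le (hterm_nn f) hT
  have hftsum : (∑' n, wfun n * (f n)^2) ≤ 200 * Sc :=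
    Real.tsum_le_of_sum_range_le (hterm_nn f) hT
  refine ⟨f, ?_, hf_l1, hf_tsum, hconv, ?_⟩
  · rw [InEll2, hwbridge f]
    exact hfsummable
  · rw [ell2Norm, ell2Norm, hwbridge f, hwbridge c]
    calc Real.sqrt (∑' n, wfun n * (f n)^2) ≤ Real.sqrt (225 * Sc) := by
          apply Real.sqrt_le_sqrt
          linarith
      _ = 15 * Real.sqrt Sc := by
          rw [show (225:ℝ)*Sc = 15^2 * Sc by ring, Real.sqrt_mul (by positivity) Sc,
            Real.sqrt_sq (by norm_num : (0:ℝ) ≤ 15)]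
      _ = 15 * Real.sqrt (∑' n, wfun n * (c n)^2) := by rw [hScdef]
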